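/- For α > 0 and r > 0, the modified Bessel function of the second kind satisfies K_α(r) = r^(−α) 2^(α−1) ∫₀^∞ u^(α−1) e^(−u) e^(−r²/(4u)) du. -/

import Mathlib

open MeasureTheory Real Set

/-!
Substituting `u = (r / 2) eᵗ` turns `u + r² / (4u)` into `r cosh t` and `u ^ (α - 1) du` into
`(r / 2) ^ α e^{αt} dt`, so the integral on the right is `(r / 2) ^ α ∫_ℝ e^{αt - r cosh t} dt`.
As `cosh` is even, averaging this integral with its reflection `t ↦ -t` gives
`2 ∫₀^∞ e^{-r cosh t} cosh (αt) dt = 2 K_α(r)`.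
-/

/-- The modified Bessel function of the second kind of order `α`. -/
noncomputable def besselK (α x : ℝ) : ℝ :=
  ∫ t in Ioi (0 : ℝ), Real.exp (-(x * Real.cosh t)) * Real.cosh (α * t)

lemma Real.sq_div_four_le_cosh (t : ℝ) : t ^ 2 / 4 ≤ cosh t := by
  rw [← cosh_abs, cosh_eq]
  have hexp := quadratic_le_exp_of_nonneg (abs_nonneg t)
  nlinarith [sq_abs t, abs_nonneg t, exp_pos (-|t|)]

lemma integrable_exp_mul_sub_mul_cosh (β : ℝ) {r : ℝ} (hr : 0 < r) :
    Integrable fun t => exp (β * t - r * cosh t) := by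
  refine ((integrable_exp_neg_mul_sq (b := r / 8) (by positivity)).const_mul
    (exp (2 * β ^ 2 / r))).mono' (by fun_prop) (.of_forall fun t => ?_)
  rw [norm_of_nonneg (exp_pos _).le, ← exp_add, exp_le_exp]
  -- completing the square: `β t - r t² / 8 ≤ 2 β² / r`
  have hsq : 0 ≤ r / 8 * (t - 4 * β / r) ^ 2 := by positivity
  have hexpand : r / 8 * (t - 4 * β / r) ^ 2 = r / 8 * t ^ 2 - β * t + 2 * β ^ 2 / r := by
    field_simp; ring
  nlinarith [mul_le_mul_of_nonneg_left (sq_div_four_le_cosh t) hr.le]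

lemma integral_exp_mul_sub_mul_cosh (α : ℝ) {r : ℝ} (hr : 0 < r) :
    ∫ t, exp (α * t - r * cosh t) = 2 * besselK α r := by
  have hreflect : ∫ t, exp (-α * t - r * cosh t) = ∫ t, exp (α * t - r * cosh t) := by
    rw [← integral_neg_eq_self]
    simp only [cosh_neg, neg_mul_neg]
  have heven : ∀ t, exp (α * t - r * cosh t) + exp (-α * t - r * cosh t)
      = 2 * (exp (-(r * cosh |t|)) * cosh (α * |t|)) := fun t => by
    have hcosh : cosh (α * |t|) = cosh (α * t) := by
      rcases abs_choice t with h | h <;> simp [h]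
    rw [hcosh, cosh_abs, sub_eq_add_neg, sub_eq_add_neg, exp_add, exp_add, cosh_eq (α * t),
      neg_mul]
    ring
  have hsum := integral_add (integrable_exp_mul_sub_mul_cosh α hr)
    (integrable_exp_mul_sub_mul_cosh (-α) hr)
  rw [hreflect] at hsum
  simp_rw [heven] at hsum
  rw [integral_comp_abs (f := fun x => 2 * (exp (-(r * cosh x)) * cosh (α * x))),
    integral_const_mul] at hsum
  unfold besselK
  linarith

lemma integral_Ioi_zero_eq_integral_comp_mul_exp {E : Type*} [NormedAddCommGroup E]
    [NormedSpace ℝ E] (g : ℝ → E) {c : ℝ} (hc : 0 < c) :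
    ∫ u in Ioi 0, g u = ∫ x, (c * exp x) • g (c * exp x) := by
  have himage : (fun x => c * exp x) '' univ = Ioi 0 := by
    refine Subset.antisymm (by rintro _ ⟨x, -, rfl⟩; exact mul_pos hc (exp_pos x))
      fun u (hu : 0 < u) => ⟨log (u / c), mem_univ _, ?_⟩
    simp only [exp_log (div_pos hu hc)]
    field_simp
  have hinj : InjOn (fun x => c * exp x) univ := fun x _ y _ hxy =>
    exp_injective (mul_left_cancel₀ hc.ne' hxy)
  rw [← himage, integral_image_eq_integral_abs_deriv_smul MeasurableSet.univ
    (fun x _ => ((hasDerivAt_exp x).const_mul c).hasDerivWithinAt) hinj, setIntegral_univ]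
  simp_rw [abs_of_pos (mul_pos hc (exp_pos _))]

lemma integral_rpow_mul_exp_neg_mul_exp_neg_div (α : ℝ) {r : ℝ} (hr : 0 < r) :
    ∫ u in Ioi 0, u ^ (α - 1) * exp (-u) * exp (-(r ^ 2) / (4 * u))
      = (r / 2) ^ α * ∫ t, exp (α * t - r * cosh t) := by
  rw [integral_Ioi_zero_eq_integral_comp_mul_exp _ (half_pos hr), ← integral_const_mul]
  congr 1 with x
  have hu : 0 < r / 2 * exp x := by positivity
  have hexp : -(r / 2 * exp x) + -r ^ 2 / (4 * (r / 2 * exp x)) = -(r * cosh x) := by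
    rw [cosh_eq, exp_neg]
    field_simp
    ring
  have hpow : (r / 2 * exp x) ^ (α - 1) * (r / 2 * exp x) = (r / 2) ^ α * exp (α * x) := by
    rw [← rpow_add_one hu.ne', sub_add_cancel, mul_rpow (half_pos hr).le (exp_pos x).le,
      ← exp_mul, mul_comm x α]
  rw [smul_eq_mul, sub_eq_add_neg (α * x), exp_add, ← hexp, exp_add]
  linear_combination (exp (-(r / 2 * exp x)) * exp (-r ^ 2 / (4 * (r / 2 * exp x)))) * hpow

theorem besselK_integral_representation_general (α r : ℝ) (hr : 0 < r) :
    besselK α r =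
      r ^ (-α) * 2 ^ (α - 1) *
        ∫ u in Ioi (0 : ℝ), u ^ (α - 1) * Real.exp (-u) * Real.exp (-(r ^ 2) / (4 * u)) := by
  rw [integral_rpow_mul_exp_neg_mul_exp_neg_div α hr, integral_exp_mul_sub_mul_cosh α hr,
    rpow_neg hr.le, rpow_sub two_pos, div_rpow hr.le zero_le_two, rpow_one]
  have hrα : 0 < r ^ α := rpow_pos_of_pos hr α
  have h2α : 0 < (2 : ℝ) ^ α := rpow_pos_of_pos two_pos α
  field_simp

theorem besselK_integral_representation (α r : ℝ) (hα : 0 < α) (hr : 0 < r) :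
    besselK α r =
      r ^ (-α) * 2 ^ (α - 1) *
        ∫ u in Ioi (0 : ℝ), u ^ (α - 1) * Real.exp (-u) * Real.exp (-(r ^ 2) / (4 * u)) :=
  besselK_integral_representation_general α r hr
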